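/- Fix integers M ≥ 1, s ≥ 0, a real P > 0 and α ∈ [0,1]. Let h_1, g_1,…,g_s, z be independent standard complex Gaussian vectors in ℂ^M. Then P( Re⟨√P·Σ_{i=1}^{s} g_i + z, h_1⟩ > α·√P·‖h_1‖² ) ≤ ( 1 + P·α²/(Ps+1) )^{−M}. -/

import Mathlib

open MeasureTheory ProbabilityTheory

/-- Standard complex Gaussian measure on `ℂ^M`: the `2M` real coordinates are
i.i.d. real Gaussian `N(0, 1/2)`. -/
noncomputable def stdCGaussian (M : ℕ) : Measure (Fin M → ℂ) :=
  (Measure.pi fun _ : Fin M =>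
    (gaussianReal 0 (1/2)).prod (gaussianReal 0 (1/2))).map
    (fun f i => ⟨(f i).1, (f i).2⟩)

/-- Complex inner product `⟨x, v⟩ = ∑ m, x m * conj (v m)`. -/
noncomputable def cip {M : ℕ} (x v : Fin M → ℂ) : ℂ :=
  ∑ m, x m * (starRingEnd ℂ) (v m)

/-- Squared Euclidean norm `‖v‖² = ∑ m, |v m|²`. -/
noncomputable def cnSq {M : ℕ} (v : Fin M → ℂ) : ℝ :=
  ∑ m, Complex.normSq (v m)

/-- The standard normal tail function `Q`. -/
noncomputable def Qfun (x : ℝ) : ℝ :=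
  ∫ t in Set.Ioi x, (Real.sqrt (2 * Real.pi))⁻¹ * Real.exp (-t ^ 2 / 2)

/-! Chernoff bound with parameter `λ = 2α√P/(Ps+1)`. Given `h₁`, the statistic
`Re⟨√P ∑ gᵢ + z, h₁⟩` is a sum of independent Gaussian terms of total variance
`(Ps+1)‖h₁‖²/2`, so `E[exp(λ(Re⟨…⟩ - α√P‖h₁‖²)) | h₁] = exp(-t‖h₁‖²)` with `t = Pα²/(Ps+1)`.
Averaging over `h₁`, each of its `2M` real coordinates contributes `E exp(-t x²) = (1+t)^{-1/2}`. -/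

open Real
open scoped NNReal ENNReal

lemma lintegral_exp_mul_gaussianReal (μ : ℝ) (v : ℝ≥0) (a : ℝ) :
    ∫⁻ x, ENNReal.ofReal (exp (a * x)) ∂gaussianReal μ v
      = ENNReal.ofReal (exp (μ * a + v * a ^ 2 / 2)) := by
  rw [← ofReal_integral_eq_lintegral_ofReal (integrable_exp_mul_gaussianReal a)
    (ae_of_all _ fun _ => (exp_pos _).le)]
  exact congrArg ENNReal.ofReal (congrFun mgf_id_gaussianReal a)

lemma lintegral_exp_neg_mul_sq_gaussianReal (v : ℝ≥0) {t : ℝ} (ht : 0 ≤ t) :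
    ∫⁻ x, ENNReal.ofReal (exp (-t * x ^ 2)) ∂gaussianReal 0 v
      = ENNReal.ofReal (√(1 + 2 * v * t))⁻¹ := by
  rcases eq_or_ne v 0 with rfl | hv
  · simp
  have hv' : (0 : ℝ) < v := by positivity
  set b : ℝ := t + (2 * (v : ℝ))⁻¹ with hb_def
  have hb : 0 < b := by positivity
  have hdens : ∀ x, gaussianPDF 0 v x * ENNReal.ofReal (exp (-t * x ^ 2))
      = ENNReal.ofReal ((√(2 * π * v))⁻¹ * exp (-b * x ^ 2)) := by
    intro x
    rw [gaussianPDF, ← ENNReal.ofReal_mul (gaussianPDFReal_nonneg _ _ _), gaussianPDFReal,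
      mul_assoc, ← exp_add]
    congr 3
    rw [hb_def]
    field_simp
    ring
  rw [gaussianReal_of_var_ne_zero _ hv, lintegral_withDensity_eq_lintegral_mul _
    (measurable_gaussianPDF _ _) (by fun_prop)]
  simp only [Pi.mul_apply, hdens]
  rw [← ofReal_integral_eq_lintegral_ofReal ((integrable_exp_neg_mul_sq hb).const_mul _)
    (ae_of_all _ fun _ => by positivity), integral_const_mul, integral_gaussian]
  congr 1
  rw [← sqrt_inv, ← sqrt_inv, ← sqrt_mul (by positivity)]
  congr 1
  rw [hb_def]
  field_simp
  ring

lemma lintegral_pi_exp_sum {ι : Type*} [Fintype ι] {X : ι → Type*} [∀ i, MeasurableSpace (X i)]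
    (μ : (i : ι) → Measure (X i)) [∀ i, IsProbabilityMeasure (μ i)] {f : (i : ι) → X i → ℝ}
    (hf : ∀ i, Measurable (f i)) :
    ∫⁻ x, ENNReal.ofReal (exp (∑ i, f i (x i))) ∂Measure.pi μ
      = ∏ i, ∫⁻ y, ENNReal.ofReal (exp (f i y)) ∂μ i := by
  have hF : ∀ i, Measurable fun y => ENNReal.ofReal (exp (f i y)) := fun i => by fun_prop
  simp_rw [exp_sum, ENNReal.ofReal_prod_of_nonneg fun i _ => (exp_pos _).le]
  rw [lintegral_prod_eq_prod_lintegral_of_indepFun _ _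
    (iIndepFun_pi fun i => (hF i).aemeasurable) fun i => (hF i).comp (measurable_pi_apply i)]
  exact Finset.prod_congr rfl fun i _ => (measurePreserving_eval μ i).lintegral_comp (hF i)

noncomputable def stdCGaussianScalar : Measure ℂ :=
  ((gaussianReal 0 (1/2)).prod (gaussianReal 0 (1/2))).map Complex.measurableEquivRealProd.symm

instance : IsProbabilityMeasure stdCGaussianScalar :=
  Measure.isProbabilityMeasure_map Complex.measurableEquivRealProd.symm.measurable.aemeasurable

lemma stdCGaussian_eq_pi (M : ℕ) :
    stdCGaussian M = Measure.pi fun _ : Fin M => stdCGaussianScalar :=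
  Measure.pi_map_pi fun _ => Complex.measurableEquivRealProd.symm.measurable.aemeasurable

lemma lintegral_exp_re_mul_conj_stdCGaussianScalar (a : ℝ) (w : ℂ) :
    ∫⁻ z, ENNReal.ofReal (exp (a * (z * (starRingEnd ℂ) w).re)) ∂stdCGaussianScalar
      = ENNReal.ofReal (exp (a ^ 2 * Complex.normSq w / 4)) := by
  have hsplit : ∀ p : ℝ × ℝ,
      ENNReal.ofReal (exp (a * (Complex.measurableEquivRealProd.symm p * (starRingEnd ℂ) w).re))
        = ENNReal.ofReal (exp (a * w.re * p.1)) * ENNReal.ofReal (exp (a * w.im * p.2)) := by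
    intro p
    rw [← ENNReal.ofReal_mul (exp_pos _).le, ← exp_add]
    simp only [Complex.measurableEquivRealProd_symm_apply, Complex.mul_re, Complex.conj_re,
      Complex.conj_im]
    ring_nf
  rw [stdCGaussianScalar, lintegral_map_equiv]
  simp_rw [hsplit]
  rw [lintegral_prod_mul (f := fun x => ENNReal.ofReal (exp (a * w.re * x)))
    (g := fun y => ENNReal.ofReal (exp (a * w.im * y))) (by fun_prop) (by fun_prop),
    lintegral_exp_mul_gaussianReal, lintegral_exp_mul_gaussianReal,
    ← ENNReal.ofReal_mul (exp_pos _).le, ← exp_add,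
    Complex.normSq_apply]
  congr 2
  push_cast
  ring

lemma lintegral_exp_neg_mul_normSq_stdCGaussianScalar {t : ℝ} (ht : 0 ≤ t) :
    ∫⁻ z, ENNReal.ofReal (exp (-t * Complex.normSq z)) ∂stdCGaussianScalar
      = ENNReal.ofReal (1 + t)⁻¹ := by
  have hsplit : ∀ p : ℝ × ℝ,
      ENNReal.ofReal (exp (-t * Complex.normSq (Complex.measurableEquivRealProd.symm p)))
        = ENNReal.ofReal (exp (-t * p.1 ^ 2)) * ENNReal.ofReal (exp (-t * p.2 ^ 2)) := by
    intro p
    rw [← ENNReal.ofReal_mul (exp_pos _).le, ← exp_add,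
      Complex.measurableEquivRealProd_symm_apply, Complex.normSq_mk]
    ring_nf
  rw [stdCGaussianScalar, lintegral_map_equiv]
  simp_rw [hsplit]
  rw [lintegral_prod_mul (f := fun x => ENNReal.ofReal (exp (-t * x ^ 2)))
    (g := fun x => ENNReal.ofReal (exp (-t * x ^ 2))) (by fun_prop) (by fun_prop),
    lintegral_exp_neg_mul_sq_gaussianReal _ ht, ← ENNReal.ofReal_mul (by positivity),
    ← mul_inv, mul_self_sqrt (by positivity)]
  norm_num

instance (M : ℕ) : IsProbabilityMeasure (stdCGaussian M) := by
  rw [stdCGaussian_eq_pi]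
  infer_instance

section ComplexGaussianVector

variable {M : ℕ}

@[fun_prop]
lemma Measurable.cip {Ω : Type*} [MeasurableSpace Ω] {x v : Ω → Fin M → ℂ} (hx : Measurable x)
    (hv : Measurable v) : Measurable fun ω => cip (x ω) (v ω) := by
  unfold _root_.cip
  fun_prop

@[fun_prop]
lemma Measurable.cnSq {Ω : Type*} [MeasurableSpace Ω] {x : Ω → Fin M → ℂ} (hx : Measurable x) :
    Measurable fun ω => cnSq (x ω) := by
  unfold _root_.cnSq
  fun_prop

lemma re_cip_ofReal_mul_sum_add {s : ℕ} (q : ℝ) (g : Fin s → Fin M → ℂ) (z h : Fin M → ℂ) :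
    (cip (fun m => q * (∑ i, g i m) + z m) h).re = q * ∑ i, (cip (g i) h).re + (cip z h).re := by
  simp only [cip, add_mul, Finset.sum_add_distrib, Finset.mul_sum, Finset.sum_mul, mul_assoc,
    Complex.add_re, Complex.re_sum, Complex.re_ofReal_mul]
  rw [Finset.sum_comm]

lemma lintegral_exp_re_cip_stdCGaussian (a : ℝ) (v : Fin M → ℂ) :
    ∫⁻ x, ENNReal.ofReal (exp (a * (cip x v).re)) ∂stdCGaussian M
      = ENNReal.ofReal (exp (a ^ 2 * cnSq v / 4)) := by
  simp_rw [stdCGaussian_eq_pi, cip, Complex.re_sum, Finset.mul_sum]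
  rw [lintegral_pi_exp_sum (f := fun m z => a * (z * (starRingEnd ℂ) (v m)).re) _
    fun m => by fun_prop]
  simp_rw [lintegral_exp_re_mul_conj_stdCGaussianScalar, ← ENNReal.ofReal_prod_of_nonneg
    fun m _ => (exp_pos _).le, ← exp_sum, cnSq, Finset.mul_sum, Finset.sum_div]

lemma lintegral_exp_neg_mul_cnSq_stdCGaussian {t : ℝ} (ht : 0 ≤ t) :
    ∫⁻ x, ENNReal.ofReal (exp (-t * cnSq x)) ∂stdCGaussian M
      = ENNReal.ofReal ((1 + t) ^ M)⁻¹ := by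
  simp_rw [stdCGaussian_eq_pi, cnSq, Finset.mul_sum]
  rw [lintegral_pi_exp_sum (f := fun _ z => -t * Complex.normSq z) _ fun m => by fun_prop]
  simp_rw [lintegral_exp_neg_mul_normSq_stdCGaussianScalar ht]
  rw [Finset.prod_const, Finset.card_univ, Fintype.card_fin,
    ← ENNReal.ofReal_pow (by positivity), inv_pow]

end ComplexGaussianVector

lemma measure_lt_le_lintegral_exp {Ω : Type*} [MeasurableSpace Ω] {μ : Measure Ω} {X Y : Ω → ℝ}
    (hXY : AEMeasurable (fun ω => X ω - Y ω) μ) {l : ℝ} (hl : 0 ≤ l) :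
    μ {ω | Y ω < X ω} ≤ ∫⁻ ω, ENNReal.ofReal (exp (l * (X ω - Y ω))) ∂μ := by
  have hF : AEMeasurable (fun ω => ENNReal.ofReal (exp (l * (X ω - Y ω)))) μ := by fun_prop
  calc μ {ω | Y ω < X ω}
      ≤ μ {ω | 1 ≤ ENNReal.ofReal (exp (l * (X ω - Y ω)))} := measure_mono fun _ hω =>
        ENNReal.one_le_ofReal.2 (one_le_exp (mul_nonneg hl (sub_nonneg.2 (le_of_lt hω))))
    _ ≤ ∫⁻ ω, ENNReal.ofReal (exp (l * (X ω - Y ω))) ∂μ := by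
        simpa using mul_meas_ge_le_lintegral₀ hF 1

lemma lintegral_exp_re_cip_signal_add_noise {M s : ℕ} (a q : ℝ) (h : Fin M → ℂ) :
    ∫⁻ p : (Fin s → Fin M → ℂ) × (Fin M → ℂ),
        ENNReal.ofReal (exp (a * (cip (fun m => q * (∑ i, p.1 i m) + p.2 m) h).re))
        ∂((Measure.pi fun _ : Fin s => stdCGaussian M).prod (stdCGaussian M))
      = ENNReal.ofReal (exp (a ^ 2 * (q ^ 2 * s + 1) * cnSq h / 4)) := by
  have hsplit : ∀ p : (Fin s → Fin M → ℂ) × (Fin M → ℂ),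
      ENNReal.ofReal (exp (a * (cip (fun m => q * (∑ i, p.1 i m) + p.2 m) h).re))
        = ENNReal.ofReal (exp (∑ i, a * q * (cip (p.1 i) h).re))
          * ENNReal.ofReal (exp (a * (cip p.2 h).re)) := by
    intro p
    rw [← ENNReal.ofReal_mul (exp_pos _).le, ← exp_add, re_cip_ofReal_mul_sum_add, mul_add,
      Finset.mul_sum, Finset.mul_sum]
    simp_rw [mul_assoc]
  simp_rw [hsplit]
  rw [lintegral_prod_mul
      (f := fun g : Fin s → Fin M → ℂ => ENNReal.ofReal (exp (∑ i, a * q * (cip (g i) h).re)))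
      (g := fun z : Fin M → ℂ => ENNReal.ofReal (exp (a * (cip z h).re)))
      (Measurable.aemeasurable (by fun_prop)) (by fun_prop),
    lintegral_pi_exp_sum (f := fun _ x => a * q * (cip x h).re) _ fun _ => by fun_prop]
  simp_rw [lintegral_exp_re_cip_stdCGaussian]
  rw [Finset.prod_const, Finset.card_univ, Fintype.card_fin, ← ENNReal.ofReal_pow (exp_pos _).le,
    ← exp_nat_mul, ← ENNReal.ofReal_mul (exp_pos _).le, ← exp_add]
  congr 2
  ring

theorem matched_filter_false_alarm_avg_general (M : ℕ)
    (s : ℕ) (P : ℝ) (hP : 0 < P) (α : ℝ) (hα0 : 0 ≤ α) :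
    ((stdCGaussian M).prod
      ((Measure.pi fun _ : Fin s => stdCGaussian M).prod (stdCGaussian M)))
      {ω : (Fin M → ℂ) × ((Fin s → Fin M → ℂ) × (Fin M → ℂ)) |
        α * Real.sqrt P * cnSq ω.1
          < (cip (fun m => Real.sqrt P * (∑ i, ω.2.1 i m) + ω.2.2 m) ω.1).re}
      ≤ ENNReal.ofReal (((1 + P * α ^ 2 / (P * s + 1)) ^ M)⁻¹) := by
  -- the Chernoff parameter minimising the bound
  set l := 2 * α * √P / (P * s + 1) with hl
  have hexponent : ∀ h : Fin M → ℂ,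
      -(l * (α * √P * cnSq h)) + l ^ 2 * (√P ^ 2 * s + 1) * cnSq h / 4
        = -(P * α ^ 2 / (P * s + 1)) * cnSq h := by
    intro h
    rw [hl]
    field_simp
    rw [sq_sqrt hP.le]
    ring
  refine (measure_lt_le_lintegral_exp (by fun_prop) (by positivity : 0 ≤ l)).trans_eq ?_
  rw [lintegral_prod _ (by fun_prop)]
  simp_rw [mul_sub, sub_eq_neg_add, exp_add, ENNReal.ofReal_mul (exp_pos _).le]
  simp_rw [lintegral_const_mul' _ _ ENNReal.ofReal_ne_top, lintegral_exp_re_cip_signal_add_noise,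
    ← ENNReal.ofReal_mul (exp_pos _).le, ← exp_add, hexponent]
  exact lintegral_exp_neg_mul_cnSq_stdCGaussian (by positivity)

/-- False-alarm probability of the matched-filter detector with threshold
`α√P‖h₁‖²` for a symbol slot in which the user of interest did not transmit and
`s` other users transmitted, averaged over `h₁`:
`P(Re⟨√P ∑ᵢ gᵢ + z, h₁⟩ > α√P‖h₁‖²) ≤ (1 + Pα²/(Ps+1))^{−M}`. -/
theorem matched_filter_false_alarm_avg (M : ℕ) (hM : 1 ≤ M)
    (s : ℕ) (P : ℝ) (hP : 0 < P) (α : ℝ) (hα0 : 0 ≤ α) (hα1 : α ≤ 1) :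
    ((stdCGaussian M).prod
      ((Measure.pi fun _ : Fin s => stdCGaussian M).prod (stdCGaussian M)))
      {ω : (Fin M → ℂ) × ((Fin s → Fin M → ℂ) × (Fin M → ℂ)) |
        α * Real.sqrt P * cnSq ω.1
          < (cip (fun m => Real.sqrt P * (∑ i, ω.2.1 i m) + ω.2.2 m) ω.1).re}
      ≤ ENNReal.ofReal (((1 + P * α ^ 2 / (P * s + 1)) ^ M)⁻¹) :=
  matched_filter_false_alarm_avg_general M s P hP α hα0
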